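/- Let λ be a finite signed Borel measure on ℝ, φ(z) = α + β z + ∫_ℝ (1+sz)/(s−z) dλ(s) with α, β ∈ ℝ, and let V_φ be the Stoltz sector {x + i y : |x| < y tan θ} for some 0 < θ < π/2 and b > 0. Then the set {(φ(x+iy) − β(x+iy))/y : x+iy ∈ V_θ, y ≥ b} is bounded, and (φ(x+iy) − β(x+iy))/y → 0 as x+iy → ∞ within V_θ. -/

import Mathlib

open MeasureTheory Filter Bornology

/-! On the sector `|Re z| < (Im z) tan θ` one has `‖z‖ ≤ K Im z` with `K = tan θ + 1`. Writing
`1 + s z = z (s - z) + (1 + z²)` and using `|s - z| ≥ Im z`, the kernel `(1 + s z) / ((s - z) Im z)`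
is bounded uniformly in `s` by `K + K² + 1 / (Im z)²`; as the measures are finite this gives the
boundedness for `Im z ≥ b`. For fixed `s` the kernel is `O(1 / Im z)`, and `Im z → ∞` along the
sector, so dominated convergence gives the limit. -/

open Complex Topology

instance {E : Type*} [SeminormedAddGroup E] : (cobounded E).IsCountablyGenerated :=
  comap_norm_atTop (E := E) ▸ inferInstance

noncomputable def nevanlinnaKernel (s : ℝ) (z : ℂ) : ℂ := (1 + s * z) / (s - z)

section Sector

variable {t : ℝ} {z : ℂ}

lemma im_pos_of_abs_re_lt (ht : 0 ≤ t) (hz : |z.re| < z.im * t) : 0 < z.im := by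
  nlinarith [abs_nonneg z.re]

lemma norm_le_of_abs_re_lt (ht : 0 ≤ t) (hz : |z.re| < z.im * t) :
    ‖z‖ ≤ (t + 1) * z.im := by
  have hy := im_pos_of_abs_re_lt ht hz
  calc ‖z‖ ≤ |z.re| + |z.im| := norm_le_abs_re_add_abs_im z
    _ ≤ (t + 1) * z.im := by rw [abs_of_pos hy]; linarith

lemma tendsto_im_cobounded_inf_principal_abs_re_lt (ht : 0 ≤ t) :
    Tendsto im (cobounded ℂ ⊓ 𝓟 {z | |z.re| < z.im * t}) atTop := by
  refine tendsto_atTop.2 fun M => ?_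
  filter_upwards [(tendsto_norm_cobounded_atTop.eventually_ge_atTop ((t + 1) * M)).filter_mono
    inf_le_left, mem_inf_of_right (mem_principal_self _)] with z hzM hz
  have := hzM.trans (norm_le_of_abs_re_lt ht hz)
  exact le_of_mul_le_mul_left this (by linarith)

end Sector

lemma im_le_norm_ofReal_sub (s : ℝ) (z : ℂ) : z.im ≤ ‖(s : ℂ) - z‖ :=
  (le_abs_self _).trans (by simpa using abs_im_le_norm ((s : ℂ) - z))

section Kernel

variable {z : ℂ}

lemma norm_nevanlinnaKernel_le (s : ℝ) (hz : 0 < z.im) :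
    ‖nevanlinnaKernel s z‖ ≤ ‖z‖ + (1 + ‖z‖ ^ 2) / z.im := by
  have hd := im_le_norm_ofReal_sub s z
  have hd0 : (s : ℂ) - z ≠ 0 := norm_pos_iff.1 (hz.trans_le hd)
  have hsplit : nevanlinnaKernel s z = z + (1 + z ^ 2) / (s - z) := by
    rw [nevanlinnaKernel]; field_simp; ring
  calc ‖nevanlinnaKernel s z‖ ≤ ‖z‖ + (1 + ‖z‖ ^ 2) / ‖(s : ℂ) - z‖ := by
        rw [hsplit]
        refine (norm_add_le _ _).trans (add_le_add_right ?_ _)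
        rw [norm_div]
        gcongr
        exact (norm_add_le _ _).trans (by simp)
    _ ≤ ‖z‖ + (1 + ‖z‖ ^ 2) / z.im := by gcongr

lemma norm_nevanlinnaKernel_le_mul_abs (s : ℝ) (hz : 0 < z.im) :
    ‖nevanlinnaKernel s z‖ ≤ (1 + |s| * ‖z‖) / z.im := by
  rw [nevanlinnaKernel, norm_div]
  gcongr
  · exact (norm_add_le _ _).trans (by simp)
  · exact im_le_norm_ofReal_sub s z

end Kernel

section Cone

variable {K : ℝ} {z : ℂ}

lemma norm_nevanlinnaKernel_div_im_le (s : ℝ) (hK : ‖z‖ ≤ K * z.im) (hz : 0 < z.im) :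
    ‖nevanlinnaKernel s z / z.im‖ ≤ K + K ^ 2 + 1 / z.im ^ 2 := by
  have hzK : ‖z‖ / z.im ≤ K := (div_le_iff₀ hz).2 hK
  calc ‖nevanlinnaKernel s z / z.im‖ = ‖nevanlinnaKernel s z‖ / z.im := by
        rw [norm_div, norm_real, Real.norm_of_nonneg hz.le]
    _ ≤ (‖z‖ + (1 + ‖z‖ ^ 2) / z.im) / z.im := by
        gcongr; exact norm_nevanlinnaKernel_le s hz
    _ = ‖z‖ / z.im + (‖z‖ / z.im) ^ 2 + 1 / z.im ^ 2 := by field_simp; ring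
    _ ≤ K + K ^ 2 + 1 / z.im ^ 2 := by gcongr

lemma norm_nevanlinnaKernel_div_im_le_mul_abs (s : ℝ) (hK : ‖z‖ ≤ K * z.im) (hz : 1 ≤ z.im) :
    ‖nevanlinnaKernel s z / z.im‖ ≤ (1 + |s| * K) / z.im := by
  have hz0 : 0 < z.im := one_pos.trans_le hz
  calc ‖nevanlinnaKernel s z / z.im‖ = ‖nevanlinnaKernel s z‖ / z.im := by
        rw [norm_div, norm_real, Real.norm_of_nonneg hz0.le]
    _ ≤ (1 + |s| * (K * z.im)) / z.im / z.im := by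
        gcongr; exact (norm_nevanlinnaKernel_le_mul_abs s hz0).trans (by gcongr)
    _ ≤ (z.im + |s| * (K * z.im)) / z.im / z.im := by gcongr
    _ = (1 + |s| * K) / z.im := by field_simp

end Cone

section Integral

variable (μ : Measure ℝ) [IsFiniteMeasure μ] {K : ℝ}

lemma norm_integral_nevanlinnaKernel_div_im_le {b : ℝ} (hb : 0 < b) {z : ℂ}
    (hK : ‖z‖ ≤ K * z.im) (hbz : b ≤ z.im) :
    ‖(∫ s, nevanlinnaKernel s z ∂μ) / z.im‖ ≤ (K + K ^ 2 + 1 / b ^ 2) * μ.real Set.univ := by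
  rw [← integral_div]
  refine norm_integral_le_of_norm_le_const (ae_of_all _ fun s => ?_)
  exact (norm_nevanlinnaKernel_div_im_le s hK (hb.trans_le hbz)).trans (by gcongr)

lemma tendsto_integral_nevanlinnaKernel_div_im {l : Filter ℂ} [l.IsCountablyGenerated]
    (him : Tendsto im l atTop) (hK : ∀ᶠ z in l, ‖z‖ ≤ K * z.im) :
    Tendsto (fun z => (∫ s, nevanlinnaKernel s z ∂μ) / z.im) l (𝓝 0) := by
  have h1 : ∀ᶠ z in l, 1 ≤ z.im := him.eventually_ge_atTop 1
  simp_rw [← integral_div]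
  rw [← integral_zero ℝ ℂ]
  refine tendsto_integral_filter_of_dominated_convergence (fun _ => K + K ^ 2 + 1)
    (Eventually.of_forall fun z => ?_) ?_ (integrable_const _) (ae_of_all _ fun s => ?_)
  · exact Measurable.aestronglyMeasurable (by unfold nevanlinnaKernel; fun_prop)
  · filter_upwards [hK, h1] with z hKz hz
    refine ae_of_all _ fun s => (norm_nevanlinnaKernel_div_im_le s hKz (one_pos.trans_le hz)).trans ?_
    gcongr
    exact div_le_one_of_le₀ (one_le_pow₀ hz) (by positivity)
  · refine squeeze_zero_norm' ?_ (tendsto_const_nhds (x := 1 + |s| * K) |>.div_atTop him)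
    filter_upwards [hK, h1] with z hKz hz
    exact norm_nevanlinnaKernel_div_im_le_mul_abs s hKz hz

end Integral

theorem stoltz_sector_growth (α β : ℝ) (lam1 lam2 : Measure ℝ)
    [IsFiniteMeasure lam1] [IsFiniteMeasure lam2] (φ : ℂ → ℂ)
    (hφ : ∀ z : ℂ, 0 < z.im →
      φ z = (α : ℂ) + (β : ℂ) * z +
        ((∫ s : ℝ, (1 + (s : ℂ) * z) / ((s : ℂ) - z) ∂lam1) -
          ∫ s : ℝ, (1 + (s : ℂ) * z) / ((s : ℂ) - z) ∂lam2))
    (θ : ℝ) (hθ : 0 < θ ∧ θ < Real.pi / 2) (b : ℝ) (hb : 0 < b) :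
    IsBounded ((fun z : ℂ => (φ z - (β : ℂ) * z) / (z.im : ℂ)) ''
        {z : ℂ | |z.re| < z.im * Real.tan θ ∧ b ≤ z.im}) ∧
      Tendsto (fun z : ℂ => (φ z - (β : ℂ) * z) / (z.im : ℂ))
        (cobounded ℂ ⊓ Filter.principal {z : ℂ | |z.re| < z.im * Real.tan θ})
        (nhds 0) := by
  have ht : 0 ≤ Real.tan θ := (Real.tan_pos_of_pos_of_lt_pi_div_two hθ.1 hθ.2).le
  set S := {z : ℂ | |z.re| < z.im * Real.tan θ}
  set K := Real.tan θ + 1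
  have hK : ∀ z ∈ S, ‖z‖ ≤ K * z.im := fun z hz => norm_le_of_abs_re_lt ht hz
  have hrep : ∀ z ∈ S, (φ z - β * z) / z.im = α / z.im +
      ((∫ s, nevanlinnaKernel s z ∂lam1) / z.im - (∫ s, nevanlinnaKernel s z ∂lam2) / z.im) := by
    intro z hz
    rw [hφ z (im_pos_of_abs_re_lt ht hz)]
    simp only [nevanlinnaKernel]
    ring
  constructor
  · rw [isBounded_iff_forall_norm_le]
    refine ⟨‖(α : ℂ)‖ / b + ((K + K ^ 2 + 1 / b ^ 2) * lam1.real Set.univ +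
      (K + K ^ 2 + 1 / b ^ 2) * lam2.real Set.univ), ?_⟩
    rintro _ ⟨z, ⟨hz, hbz⟩, rfl⟩
    beta_reduce
    rw [hrep z hz]
    refine (norm_add_le _ _).trans (add_le_add ?_ ((norm_sub_le _ _).trans (add_le_add
      (norm_integral_nevanlinnaKernel_div_im_le lam1 hb (hK z hz) hbz)
      (norm_integral_nevanlinnaKernel_div_im_le lam2 hb (hK z hz) hbz))))
    rw [norm_div, norm_real z.im, Real.norm_of_nonneg (hb.trans_le hbz).le]
    exact div_le_div_of_nonneg_left (norm_nonneg _) hb hbz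
  · have him := tendsto_im_cobounded_inf_principal_abs_re_lt ht
    have hKl : ∀ᶠ z in cobounded ℂ ⊓ 𝓟 S, ‖z‖ ≤ K * z.im :=
      eventually_inf_principal.2 (Eventually.of_forall hK)
    refine Tendsto.congr' (eventually_inf_principal.2 (Eventually.of_forall fun z hz =>
      (hrep z hz).symm)) ?_
    have hα := (continuous_ofReal.tendsto 0).comp (tendsto_const_nhds (x := α) |>.div_atTop him)
    simpa using hα.add ((tendsto_integral_nevanlinnaKernel_div_im lam1 him hKl).sub
      (tendsto_integral_nevanlinnaKernel_div_im lam2 him hKl))
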